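/- Let σ₁, σ₂ > 0 with σ₁ ≠ σ₂, set p = σ₂/(σ₁+σ₂), q = σ₁/(σ₁+σ₂), λ₁ = σ₁²/8, λ₂ = σ₂²/8, and let g(u, v) = pq/(√(2π)(p²u + q²v)^{3/2}). Then for every s > 0, ∫₀^s g(s−v, v)·exp(−v λ₁ − (s−v) λ₂) dv = (σ₁σ₂/(σ₁−σ₂))·[ (2/√(2π s))·( e^{−s σ₂²/8}/σ₂ − e^{−s σ₁²/8}/σ₁ ) + Φ(√s·σ₂/2) − Φ(√s·σ₁/2) ]. -/

import Mathlib

open Real MeasureTheory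

/-- `g p q u v = pq / (√(2π)·(p²u + q²v)^{3/2})`. -/
noncomputable def gFun (p q u v : ℝ) : ℝ :=
  p * q / (Real.sqrt (2 * Real.pi) * (p ^ 2 * u + q ^ 2 * v) ^ ((3:ℝ)/2))

/-- The cumulative distribution function of the standard normal distribution. -/
noncomputable def stdCDF (z : ℝ) : ℝ :=
  ∫ y in Set.Iic z, Real.exp (-(y ^ 2) / 2) / Real.sqrt (2 * Real.pi)

lemma gauss_integrable :
    Integrable (fun y : ℝ => Real.exp (-(y ^ 2) / 2) / Real.sqrt (2 * Real.pi)) := by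
  have h : Integrable (fun y : ℝ => Real.exp (-(1/2) * y ^ 2)) :=
    integrable_exp_neg_mul_sq (by norm_num)
  have := h.div_const (Real.sqrt (2 * Real.pi))
  convert this using 2 with y
  ring_nf

lemma hasDerivAt_stdCDF (z : ℝ) :
    HasDerivAt stdCDF (Real.exp (-(z ^ 2) / 2) / Real.sqrt (2 * Real.pi)) z := by
  have key : ∀ x : ℝ, stdCDF x
      = stdCDF 0 + ∫ y in (0:ℝ)..x, Real.exp (-(y ^ 2) / 2) / Real.sqrt (2 * Real.pi) := by
    intro x
    have := intervalIntegral.integral_Iic_sub_Iic (a := (0:ℝ)) (b := x)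
      (gauss_integrable.integrableOn) (gauss_integrable.integrableOn)
    unfold stdCDF
    rw [← this]
    ring
  have hc : Continuous (fun y : ℝ => Real.exp (-(y ^ 2) / 2) / Real.sqrt (2 * Real.pi)) := by
    continuity
  have hd : HasDerivAt
      (fun x => stdCDF 0 + ∫ y in (0:ℝ)..x, Real.exp (-(y ^ 2) / 2) / Real.sqrt (2 * Real.pi))
      (Real.exp (-(z ^ 2) / 2) / Real.sqrt (2 * Real.pi)) z := by
    apply HasDerivAt.const_add
    exact intervalIntegral.integral_hasDerivAt_right (gauss_integrable.intervalIntegrable)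
      (hc.stronglyMeasurableAtFilter _ _) hc.continuousAt
  have heq : stdCDF = fun x => stdCDF 0 +
      ∫ y in (0:ℝ)..x, Real.exp (-(y ^ 2) / 2) / Real.sqrt (2 * Real.pi) := funext key
  rw [heq]
  exact hd

noncomputable def Haux (w : ℝ) : ℝ :=
  -2 * Real.exp (-w/8) / (Real.sqrt (2*Real.pi) * Real.sqrt w) - stdCDF (Real.sqrt w / 2)

lemma hasDerivAt_Haux (w : ℝ) (hw : 0 < w) :
    HasDerivAt Haux (Real.exp (-w/8) / (Real.sqrt (2*Real.pi) * (w * Real.sqrt w))) w := by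
  have hS : 0 < Real.sqrt w := Real.sqrt_pos.2 hw
  have hS2 : Real.sqrt w ^ 2 = w := Real.sq_sqrt hw.le
  have h2pi : 0 < Real.sqrt (2*Real.pi) := Real.sqrt_pos.2 (by positivity)
  have hsq : HasDerivAt Real.sqrt (1/(2*Real.sqrt w)) w := Real.hasDerivAt_sqrt hw.ne'
  have he : HasDerivAt (fun x : ℝ => Real.exp (-x/8)) (Real.exp (-w/8) * (-1/8)) w := by
    have h0 : HasDerivAt (fun x : ℝ => -x/8) (-1/8) w := by
      simpa using ((hasDerivAt_id w).neg.div_const 8)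
    simpa using h0.exp
  have hnum : HasDerivAt (fun x : ℝ => -2 * Real.exp (-x/8)) (-2 * (Real.exp (-w/8) * (-1/8))) w :=
    he.const_mul _
  have hden : HasDerivAt (fun x : ℝ => Real.sqrt (2*Real.pi) * Real.sqrt x)
      (Real.sqrt (2*Real.pi) * (1/(2*Real.sqrt w))) w := hsq.const_mul _
  have h1 := hnum.div hden (by positivity)
  have h2 : HasDerivAt (fun x : ℝ => stdCDF (Real.sqrt x / 2))
      (Real.exp (-((Real.sqrt w / 2) ^ 2) / 2) / Real.sqrt (2*Real.pi) * (1/(2*Real.sqrt w)/2)) w :=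
    (hasDerivAt_stdCDF _).comp w (hsq.div_const 2)
  have hH := h1.sub h2
  refine HasDerivAt.congr_deriv hH ?_
  symm
  have harg : -((Real.sqrt w / 2) ^ 2) / 2 = -w/8 := by
    rw [div_pow, hS2]; ring
  rw [harg]
  set S := Real.sqrt w with hSdef
  rw [show w = S^2 from hS2.symm]
  field_simp
  ring

theorem integral_g_exp_eq (σ₁ σ₂ : ℝ) (h1 : 0 < σ₁) (h2 : 0 < σ₂) (hne : σ₁ ≠ σ₂)
    (p q lam₁ lam₂ : ℝ)
    (hp : p = σ₂ / (σ₁ + σ₂)) (hq : q = σ₁ / (σ₁ + σ₂))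
    (hlam1 : lam₁ = σ₁ ^ 2 / 8) (hlam2 : lam₂ = σ₂ ^ 2 / 8)
    (s : ℝ) (hs : 0 < s) :
    ∫ v in (0:ℝ)..s, gFun p q (s - v) v * Real.exp (-v * lam₁ - (s - v) * lam₂)
      = σ₁ * σ₂ / (σ₁ - σ₂) *
          (2 / Real.sqrt (2 * Real.pi * s)
              * (Real.exp (-s * σ₂ ^ 2 / 8) / σ₂ - Real.exp (-s * σ₁ ^ 2 / 8) / σ₁)
            + stdCDF (Real.sqrt s * σ₂ / 2) - stdCDF (Real.sqrt s * σ₁ / 2)) := by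
  have hA : 0 < σ₁ + σ₂ := by positivity
  have hsub : σ₁ - σ₂ ≠ 0 := sub_ne_zero.2 hne
  have h2pi : 0 < Real.sqrt (2*Real.pi) := Real.sqrt_pos.2 (by positivity)
  set c := σ₁ * σ₂ / (σ₁ - σ₂) with hc
  -- positivity of the inner substitution
  have hwpos : ∀ v ∈ Set.uIcc (0:ℝ) s, 0 < σ₂^2*s + (σ₁^2-σ₂^2)*v := by
    intro v hv
    rw [Set.uIcc_of_le hs.le] at hv
    obtain ⟨hv0, hvs⟩ := hv
    have heq : σ₂^2*s + (σ₁^2-σ₂^2)*v = σ₂^2*(s-v) + σ₁^2*v := by ring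
    rw [heq]
    rcases lt_or_ge 0 v with h | h
    · have : 0 < σ₁^2*v := by positivity
      nlinarith [mul_nonneg (sq_nonneg σ₂) (sub_nonneg.2 hvs)]
    · have hv : v = 0 := le_antisymm h hv0
      subst hv; simp; positivity
  -- derivative statement
  have hderiv : ∀ v ∈ Set.uIcc (0:ℝ) s,
      HasDerivAt (fun v => c * Haux (σ₂^2*s + (σ₁^2-σ₂^2)*v))
        (gFun p q (s - v) v * Real.exp (-v * lam₁ - (s - v) * lam₂)) v := by
    intro v hv
    have hw := hwpos v hv
    set w := σ₂^2*s + (σ₁^2-σ₂^2)*v with hwdef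
    have hin : HasDerivAt (fun v : ℝ => σ₂^2*s + (σ₁^2-σ₂^2)*v) (σ₁^2-σ₂^2) v := by
      simpa using ((hasDerivAt_id v).const_mul (σ₁^2-σ₂^2)).const_add (σ₂^2*s)
    have hcomp := (((hasDerivAt_Haux w hw).comp v hin).const_mul c)
    refine HasDerivAt.congr_deriv hcomp ?_
    symm
    -- value equality
    have hP : p^2*(s-v) + q^2*v = w / (σ₁+σ₂)^2 := by
      rw [hp, hq, hwdef]; field_simp; ring
    have hrpow : (w / (σ₁+σ₂)^2) ^ ((3:ℝ)/2) = (w * Real.sqrt w) / (σ₁+σ₂)^3 := by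
      rw [Real.div_rpow hw.le (by positivity)]
      congr 1
      · rw [show ((3:ℝ)/2) = 1 + 1/2 by norm_num, Real.rpow_add hw, Real.rpow_one,
          ← Real.sqrt_eq_rpow]
      · rw [← Real.rpow_natCast (σ₁+σ₂) 2, ← Real.rpow_mul hA.le]
        norm_num
    have hexp : -v * lam₁ - (s - v) * lam₂ = -w/8 := by
      rw [hlam1, hlam2, hwdef]; ring
    rw [hexp]
    unfold gFun
    rw [hP, hrpow, hp, hq]
    have hsw : 0 < Real.sqrt w := Real.sqrt_pos.2 hw
    rw [hc]
    field_simp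
    ring
  -- interval integrability
  have hint : IntervalIntegrable
      (fun v => gFun p q (s - v) v * Real.exp (-v * lam₁ - (s - v) * lam₂)) volume 0 s := by
    apply ContinuousOn.intervalIntegrable
    have hPpos : ∀ v ∈ Set.uIcc (0:ℝ) s, 0 < p^2*(s-v) + q^2*v := by
      intro v hv
      have hP : p^2*(s-v) + q^2*v = (σ₂^2*s + (σ₁^2-σ₂^2)*v) / (σ₁+σ₂)^2 := by
        rw [hp, hq]; field_simp; ring
      rw [hP]
      exact div_pos (hwpos v hv) (by positivity)
    apply ContinuousOn.mul
    · unfold gFun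
      apply ContinuousOn.div continuousOn_const
      · apply ContinuousOn.mul continuousOn_const
        apply ContinuousOn.rpow_const
        · fun_prop
        · intro v hv; exact Or.inl (hPpos v hv).ne'
      · intro v hv
        have := Real.rpow_pos_of_pos (hPpos v hv) ((3:ℝ)/2)
        positivity
    · fun_prop
  rw [intervalIntegral.integral_eq_sub_of_hasDerivAt hderiv hint]
  -- evaluate endpoints
  have hws : σ₂^2*s + (σ₁^2-σ₂^2)*s = σ₁^2*s := by ring
  have hw0 : σ₂^2*s + (σ₁^2-σ₂^2)*0 = σ₂^2*s := by ring
  rw [hws, hw0]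
  have hsqrt1 : Real.sqrt (σ₁^2*s) = σ₁ * Real.sqrt s := by
    rw [Real.sqrt_mul (sq_nonneg σ₁), Real.sqrt_sq h1.le]
  have hsqrt2 : Real.sqrt (σ₂^2*s) = σ₂ * Real.sqrt s := by
    rw [Real.sqrt_mul (sq_nonneg σ₂), Real.sqrt_sq h2.le]
  have hsqrts : Real.sqrt (2*Real.pi*s) = Real.sqrt (2*Real.pi) * Real.sqrt s := by
    rw [Real.sqrt_mul (by positivity)]
  unfold Haux
  rw [hsqrt1, hsqrt2, hsqrts]
  have hss : 0 < Real.sqrt s := Real.sqrt_pos.2 hs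
  have e1 : Real.exp (-(σ₁^2*s)/8) = Real.exp (-s * σ₁^2/8) := by ring_nf
  have e2 : Real.exp (-(σ₂^2*s)/8) = Real.exp (-s * σ₂^2/8) := by ring_nf
  have a1 : σ₁ * Real.sqrt s / 2 = Real.sqrt s * σ₁ / 2 := by ring
  have a2 : σ₂ * Real.sqrt s / 2 = Real.sqrt s * σ₂ / 2 := by ring
  rw [e1, e2, a1, a2]
  field_simp
  ring
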